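/- Assume r(t,i) ≥ 0 for all (t,i). Let P be the unique solution of the P-system associated with (ρ, r, Q) (which is strictly positive), and let H be the unique solution of the H-system associated with (r, Q, P). Then 0 < H(t,i) ≤ 1 for all t ∈ [0,T] and all i = 1,…,m. -/

import Mathlib

open MeasureTheory Filter
open scoped BigOperators Topology

/-- `Q` is the generator matrix of a continuous-time Markov chain:
off-diagonal entries are nonnegative and each row sums to zero. -/
def IsGenerator {S : Type*} [Fintype S] (Q : Matrix S S ℝ) : Prop :=
  (∀ i j, i ≠ j → 0 ≤ Q i j) ∧ ∀ i, ∑ j, Q i j = 0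

/-- `f : [0,T] × S → ℝ` is bounded and measurable (in time, for each state). -/
def BddMeasOn {S : Type*} [Fintype S] (T : ℝ) (f : ℝ → S → ℝ) : Prop :=
  (∀ i, Measurable fun t => f t i) ∧
    ∃ C : ℝ, ∀ t ∈ Set.Icc (0:ℝ) T, ∀ i, |f t i| ≤ C

/-- `P` is a solution of the P-system associated with `(ρ, r, Q)` on `[0,T]`:
`P` is continuous on `[0,T]` and
`P(t,i) = 1 - ∫_t^T [P(s,i)(ρ(s,i) - 2 r(s,i)) - Σ_j q_{ij} P(s,j)] ds`. -/
def IsPSol {S : Type*} [Fintype S] (T : ℝ) (Q : Matrix S S ℝ)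
    (ρ r : ℝ → S → ℝ) (P : ℝ → S → ℝ) : Prop :=
  (∀ i, ContinuousOn (fun t => P t i) (Set.Icc 0 T)) ∧
    ∀ t ∈ Set.Icc (0:ℝ) T, ∀ i,
      P t i = 1 - ∫ s in t..T, (P s i * (ρ s i - 2 * r s i) - ∑ j, Q i j * P s j)

/-- `H` is a solution of the H-system associated with `(r, Q, P)` on `[0,T]`:
`H` is continuous on `[0,T]` and
`H(t,i) = 1 - ∫_t^T [H(s,i) r(s,i) - (1/P(s,i)) Σ_j q_{ij} P(s,j) H(s,j)
  + (H(s,i)/P(s,i)) Σ_j q_{ij} P(s,j)] ds`. -/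
def IsHSol {S : Type*} [Fintype S] (T : ℝ) (Q : Matrix S S ℝ)
    (r : ℝ → S → ℝ) (P : ℝ → S → ℝ) (H : ℝ → S → ℝ) : Prop :=
  (∀ i, ContinuousOn (fun t => H t i) (Set.Icc 0 T)) ∧
    ∀ t ∈ Set.Icc (0:ℝ) T, ∀ i,
      H t i = 1 - ∫ s in t..T,
        (H s i * r s i - (1 / P s i) * ∑ j, Q i j * P s j * H s j
          + (H s i / P s i) * ∑ j, Q i j * P s j)

/-!
Both systems are backward linear systems
`X(t,i) = κ_i - ∫_t^T (a_i X_i - ∑_j b_ij (X_j - X_i) - h_i)` with bounded `a` and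
off-diagonal rates `b_ij ≥ 0`, and such systems satisfy a comparison principle: `κ ≥ 0`, `h ≥ 0`
force `X ≥ 0`, and `κ > 0` forces `X > 0`. It is proved by a first-touching argument against
the barrier `ε e^{L(T-t)}`, with `L` larger than the growth rate the coefficients allow.

Since the rows of `Q` sum to zero, the P-system has this form with `a = ρ - 2r`, `b = Q`, so
`P > 0`. Then the H-system has this form with `a = r` and the `P`-transformed rates
`b_ij = q_ij P_j / P_i`, so `H > 0`, and `1 - H` solves it with `κ = 0` and forcing `h = r ≥ 0`,
so `H ≤ 1`.
-/

open Set

theorem MeasureTheory.IntegrableOn.intervalIntegrable_of_mem_Icc {f : ℝ → ℝ} {a b u v : ℝ}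
    (hf : IntegrableOn f (Icc a b)) (hu : u ∈ Icc a b) (hv : v ∈ Icc a b) :
    IntervalIntegrable f volume u v :=
  (hf.mono_set (uIcc_subset_Icc hu hv)).intervalIntegrable

theorem pos_of_integral_eq_of_neg_near_zero {S : Type*} [Finite S] {T η : ℝ} {Y G : ℝ → S → ℝ}
    {κ : S → ℝ}
    (hY : ∀ i, ContinuousOn (Y · i) (Icc 0 T))
    (hG : ∀ i, IntegrableOn (G · i) (Icc 0 T))
    (heq : ∀ t ∈ Icc 0 T, ∀ i, Y t i = κ i - ∫ s in t..T, G s i)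
    (hκ : ∀ i, 0 < κ i) (hη : 0 < η)
    (hG_neg : ∀ s ∈ Icc 0 T, ∀ i, (∀ j, 0 < Y s j) → Y s i < η → G s i < 0) :
    ∀ t ∈ Icc 0 T, ∀ i, 0 < Y t i := by
  by_contra! ⟨t₀, ht₀, i₀, hi₀⟩
  have hT : T ∈ Icc 0 T := ⟨ht₀.1.trans ht₀.2, le_rfl⟩
  have hYT : ∀ i, Y T i = κ i := fun i => by simpa using heq T hT i
  -- `Z` has a last point `τ`; just after `τ`, `G_i < 0` would push `Y_i` below `Y_i τ ≤ 0`.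
  set Z := ⋃ i, Icc 0 T ∩ (Y · i) ⁻¹' Iic 0
  have hZ : IsCompact Z := isCompact_iUnion fun i =>
    isCompact_Icc.of_isClosed_subset
      ((hY i).preimage_isClosed_of_isClosed isClosed_Icc isClosed_Iic) inter_subset_left
  obtain ⟨τ, hτZ, hτ_max⟩ := hZ.exists_isGreatest ⟨t₀, mem_iUnion.2 ⟨i₀, ht₀, hi₀⟩⟩
  obtain ⟨i, hτ, hi : Y τ i ≤ 0⟩ := mem_iUnion.1 hτZ
  have hτT : τ < T := hτ.2.lt_of_ne fun h => by
    rw [h, hYT] at hi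
    exact (hκ i).not_ge hi
  have h_after : ∀ s ∈ Ioc τ T, ∀ j, 0 < Y s j := fun s hs j => by
    by_contra! h
    exact hs.1.not_ge (hτ_max (mem_iUnion.2 ⟨j, ⟨hτ.1.trans hs.1.le, hs.2⟩, h⟩))
  have h_small : ∀ᶠ s in 𝓝[>] τ, Y s i < η :=
    nhdsWithin_le_of_mem (Icc_mem_nhdsGT_of_mem ⟨hτ.1, hτT⟩)
      (((hY i) τ hτ).eventually_lt_const (hi.trans_lt hη))
  obtain ⟨u, hτu, hu⟩ := mem_nhdsGT_iff_exists_Ioo_subset.1 h_small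
  set t := min u T
  have hτt : τ < t := lt_min hτu hτT
  have ht : t ∈ Icc 0 T := ⟨hτ.1.trans hτt.le, min_le_right _ _⟩
  have hint : ∀ v w, v ∈ Icc 0 T → w ∈ Icc 0 T → IntervalIntegrable (G · i) volume v w :=
    fun v w hv hw => (hG i).intervalIntegrable_of_mem_Icc hv hw
  have h_incr : Y t i - Y τ i = ∫ s in τ..t, G s i := by
    rw [heq t ht, heq τ hτ, ← intervalIntegral.integral_add_adjacent_intervals
      (hint τ t hτ ht) (hint t T ht hT)]
    ring
  have h_decr : 0 < ∫ s in τ..t, -G s i :=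
    intervalIntegral.intervalIntegral_pos_of_pos_on (hint τ t hτ ht).neg
      (fun s hs => neg_pos.2 <| hG_neg s ⟨hτ.1.trans hs.1.le, hs.2.le.trans ht.2⟩ i
        (h_after s ⟨hs.1, hs.2.le.trans ht.2⟩) (hu ⟨hs.1, hs.2.trans_le (min_le_left _ _)⟩))
      hτt
  rw [intervalIntegral.integral_neg] at h_decr
  linarith [h_after t ⟨hτt, ht.2⟩ i]

theorem integral_mul_exp_mul_sub (c a b T : ℝ) :
    ∫ s in a..b, c * Real.exp (c * (s - T)) = Real.exp (c * (b - T)) - Real.exp (c * (a - T)) := by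
  refine intervalIntegral.integral_eq_sub_of_hasDerivAt (f := fun s => Real.exp (c * (s - T)))
    (fun s _ => ?_)
    ((by fun_prop : Continuous fun s => c * Real.exp (c * (s - T))).intervalIntegrable a b)
  simpa [mul_comm] using (((hasDerivAt_id s).sub_const T).const_mul c).exp

section Comparison

variable {S : Type*} [Fintype S] {T : ℝ}

theorem nonneg_of_integral_eq_of_le {X F : ℝ → S → ℝ} {κ : S → ℝ} {C : ℝ}
    (hX : ∀ i, ContinuousOn (X · i) (Icc 0 T))
    (hF : ∀ i, IntegrableOn (F · i) (Icc 0 T))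
    (heq : ∀ t ∈ Icc 0 T, ∀ i, X t i = κ i - ∫ s in t..T, F s i)
    (hκ : ∀ i, 0 ≤ κ i) (hC : 0 ≤ C)
    (hF_le : ∀ s ∈ Icc 0 T, ∀ i, F s i ≤ C * (|X s i| + ∑ j, (X s j)⁻)) :
    ∀ t ∈ Icc 0 T, ∀ i, 0 ≤ X t i := by
  set L := C * (Fintype.card S + 1) + 1
  have hL : 0 < L := by positivity
  set E : ℝ → ℝ := fun s => Real.exp (-L * (s - T))
  have hE_int : ∀ t, ∫ s in t..T, L * E s = E t - 1 := fun t => by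
    have := integral_mul_exp_mul_sub (-L) t T T
    simp only [neg_mul, intervalIntegral.integral_neg, sub_self, mul_zero, Real.exp_zero] at this
    simp only [E, neg_mul]
    linarith
  -- Going backwards in time, `ε E` grows faster than `hF_le` lets `X` decrease.
  have h_barrier : ∀ ε > 0, ∀ t ∈ Icc 0 T, ∀ i, 0 < X t i + ε * E t := by
    intro ε hε
    refine pos_of_integral_eq_of_neg_near_zero (G := fun s i => F s i - ε * (L * E s))
      (κ := fun i => κ i + ε) (η := ε / (C + 1))
      (fun i => (hX i).add (Continuous.continuousOn (by fun_prop)))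
      (fun i => (hF i).sub (Continuous.integrableOn_Icc (by fun_prop)))
      (fun t ht i => ?_) (fun i => by linarith [hκ i]) (by positivity)
      (fun s hs i hpos hsmall => ?_)
    · rw [intervalIntegral.integral_sub ((hF i).intervalIntegrable_of_mem_Icc ht
        ⟨ht.1.trans ht.2, le_rfl⟩) (Continuous.intervalIntegrable (by fun_prop) _ _),
        intervalIntegral.integral_const_mul, hE_int, heq t ht i]
      ring
    · have hE1 : 1 ≤ E s := Real.one_le_exp (by nlinarith [hs.2])
      have hεE : 0 < ε * E s := by positivity
      have h_neg : ∀ j, (X s j)⁻ ≤ ε * E s := fun j =>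
        sup_le (by linarith [hpos j]) (by positivity)
      have h_abs : |X s i| ≤ ε / (C + 1) + ε * E s :=
        abs_le.2 ⟨by linarith [hpos i], by linarith [hpos i]⟩
      have h_sum : ∑ j, (X s j)⁻ ≤ Fintype.card S * (ε * E s) := by
        simpa using Finset.sum_le_card_nsmul Finset.univ _ _ fun j _ => h_neg j
      have h_η : C * (ε / (C + 1)) < ε := by
        rw [mul_div_assoc', div_lt_iff₀ (by positivity)]
        linarith
      calc F s i - ε * (L * E s)
          ≤ C * (ε / (C + 1) + ε * E s + Fintype.card S * (ε * E s)) - ε * (L * E s) := by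
            gcongr
            exact (hF_le s hs i).trans (by gcongr)
        _ = C * (ε / (C + 1)) - ε * E s := by ring
        _ < 0 := by nlinarith
  intro t ht i
  refine le_of_forall_pos_lt_add fun δ hδ => ?_
  have hE : 0 < E t := Real.exp_pos _
  simpa [div_mul_cancel₀ δ hE.ne'] using h_barrier (δ / E t) (by positivity) t ht i

theorem pos_of_integral_eq_of_le {X F : ℝ → S → ℝ} {κ : S → ℝ} {C : ℝ}
    (hX : ∀ i, ContinuousOn (X · i) (Icc 0 T))
    (hF : ∀ i, IntegrableOn (F · i) (Icc 0 T))
    (heq : ∀ t ∈ Icc 0 T, ∀ i, X t i = κ i - ∫ s in t..T, F s i)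
    (hκ : ∀ i, 0 < κ i) (hC : 0 ≤ C)
    (hF_le : ∀ s ∈ Icc 0 T, ∀ i, F s i ≤ C * (|X s i| + ∑ j, (X s j)⁻)) :
    ∀ t ∈ Icc 0 T, ∀ i, 0 < X t i := by
  set W : ℝ → ℝ := fun s => Real.exp (C * (s - T))
  have hW : ∀ s, 0 < W s := fun s => Real.exp_pos _
  -- `κ W` is a subsolution: `W' = C W`, `W(T) = 1`.
  have h_comp := nonneg_of_integral_eq_of_le (X := fun t i => X t i - κ i * W t)
    (F := fun s i => F s i - κ i * (C * W s)) (κ := 0)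
    (fun i => (hX i).sub (Continuous.continuousOn (by fun_prop)))
    (fun i => (hF i).sub (Continuous.integrableOn_Icc (by fun_prop)))
    (fun t ht i => ?_) (fun _ => le_rfl) hC (fun s hs i => ?_)
  · exact fun t ht i => by nlinarith [h_comp t ht i, hW t, hκ i]
  · rw [intervalIntegral.integral_sub ((hF i).intervalIntegrable_of_mem_Icc ht
      ⟨ht.1.trans ht.2, le_rfl⟩) (Continuous.intervalIntegrable (by fun_prop) _ _),
      intervalIntegral.integral_const_mul, integral_mul_exp_mul_sub, heq t ht i]
    simp only [Pi.zero_apply, sub_self, mul_zero, Real.exp_zero, zero_sub, neg_sub, W]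
    ring
  · have h_abs : |X s i| ≤ |X s i - κ i * W s| + κ i * W s := by
      simpa [abs_of_pos (mul_pos (hκ i) (hW s))] using abs_sub_abs_le_abs_sub (X s i) (κ i * W s)
    have h_neg : ∀ j, (X s j)⁻ ≤ (X s j - κ j * W s)⁻ := fun j =>
      sup_le_sup_right (by nlinarith [hκ j, hW s]) 0
    calc F s i - κ i * (C * W s)
        ≤ C * (|X s i - κ i * W s| + κ i * W s + ∑ j, (X s j - κ j * W s)⁻) - κ i * (C * W s) := by
          gcongr
          exact (hF_le s hs i).trans (by gcongr; exact h_neg _)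
      _ = C * (|X s i - κ i * W s| + ∑ j, (X s j - κ j * W s)⁻) := by ring

end Comparison

section BddMeasOn

variable {S : Type*} [Fintype S] {T : ℝ} {f g : ℝ → S → ℝ}

theorem BddMeasOn.sub (hf : BddMeasOn T f) (hg : BddMeasOn T g) :
    BddMeasOn T fun t i => f t i - g t i := by
  obtain ⟨hf_meas, C, hC⟩ := hf
  obtain ⟨hg_meas, D, hD⟩ := hg
  exact ⟨fun i => (hf_meas i).sub (hg_meas i),
    C + D, fun t ht i => (abs_sub _ _).trans (add_le_add (hC t ht i) (hD t ht i))⟩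

theorem BddMeasOn.const_mul (c : ℝ) (hf : BddMeasOn T f) : BddMeasOn T fun t i => c * f t i := by
  obtain ⟨hf_meas, C, hC⟩ := hf
  refine ⟨fun i => (hf_meas i).const_mul c, |c| * C, fun t ht i => ?_⟩
  rw [abs_mul]
  exact mul_le_mul_of_nonneg_left (hC t ht i) (abs_nonneg c)

theorem BddMeasOn.integrableOn_mul (hf : BddMeasOn T f) {g : ℝ → ℝ}
    (hg : IntegrableOn g (Icc 0 T)) (i : S) : IntegrableOn (fun t => f t i * g t) (Icc 0 T) := by
  obtain ⟨hf_meas, C, hC⟩ := hf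
  exact hg.bdd_mul (hf_meas i).aestronglyMeasurable
    (ae_restrict_of_forall_mem measurableSet_Icc fun t ht => hC t ht i)

theorem BddMeasOn.integrableOn (hf : BddMeasOn T f) (i : S) : IntegrableOn (f · i) (Icc 0 T) := by
  simpa using hf.integrableOn_mul (g := fun _ => 1) (integrableOn_const measure_Icc_lt_top.ne) i

end BddMeasOn

section LinearSystem

variable {S : Type*} [Fintype S] {T : ℝ}

theorem le_mul_abs_add_sum_negPart (a h : ℝ) (b x : S → ℝ) (i : S) (hb : ∀ j, j ≠ i → 0 ≤ b j)
    (hh : 0 ≤ h) :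
    a * x i - ∑ j, b j * (x j - x i) - h ≤ (|a| + ∑ j, |b j|) * (|x i| + ∑ j, (x j)⁻) := by
  set N := |x i| + ∑ j, (x j)⁻
  have h_sum : ∀ j, (x j)⁻ ≤ ∑ k, (x k)⁻ := fun j =>
    Finset.single_le_sum (fun k _ => negPart_nonneg (x k)) (Finset.mem_univ j)
  have hN : |x i| ≤ N := le_add_of_nonneg_right ((negPart_nonneg _).trans (h_sum i))
  have h_term : ∀ j, -(b j * (x j - x i)) ≤ |b j| * N := by
    intro j
    rcases eq_or_ne j i with rfl | hji
    · simpa using mul_nonneg (abs_nonneg (b j)) ((abs_nonneg _).trans hN)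
    · rw [abs_of_nonneg (hb j hji), ← mul_neg]
      refine mul_le_mul_of_nonneg_left ?_ (hb j hji)
      linarith [neg_le_negPart (x j), h_sum j, le_abs_self (x i)]
  have h_ax : a * x i ≤ |a| * N :=
    (le_abs_self _).trans (by rw [abs_mul]; exact mul_le_mul_of_nonneg_left hN (abs_nonneg a))
  calc a * x i - ∑ j, b j * (x j - x i) - h ≤ |a| * N + ∑ j, |b j| * N := by
        linarith [Finset.sum_le_sum fun j (_ : j ∈ Finset.univ) => h_term j, Finset.sum_neg_distrib
          (s := Finset.univ) (f := fun j => b j * (x j - x i))]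
    _ = (|a| + ∑ j, |b j|) * N := by rw [← Finset.sum_mul]; ring

def linearDrift (a : ℝ → S → ℝ) (b : ℝ → S → S → ℝ) (h X : ℝ → S → ℝ) (s : ℝ) (i : S) : ℝ :=
  a s i * X s i - ∑ j, b s i j * (X s j - X s i) - h s i

variable {X a h : ℝ → S → ℝ} {b : ℝ → S → S → ℝ} {κ : S → ℝ}

theorem exists_linearDrift_le (ha : BddMeasOn T a) (hb : ∀ i j, ContinuousOn (b · i j) (Icc 0 T))
    (hb_off : ∀ s ∈ Icc 0 T, ∀ i j, i ≠ j → 0 ≤ b s i j)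
    (hh_nonneg : ∀ s ∈ Icc 0 T, ∀ i, 0 ≤ h s i) :
    ∃ C, 0 ≤ C ∧ ∀ s ∈ Icc 0 T, ∀ i,
      linearDrift a b h X s i ≤ C * (|X s i| + ∑ j, (X s j)⁻) := by
  obtain ⟨-, Ca, hCa⟩ := ha
  obtain ⟨Cb, hCb⟩ := isCompact_Icc.exists_bound_of_continuousOn
    (continuousOn_pi.2 fun i => continuousOn_pi.2 fun j => hb i j)
  refine ⟨|Ca| + Fintype.card S * |Cb|, by positivity, fun s hs i => ?_⟩
  have hb_le : ∀ j, |b s i j| ≤ |Cb| := fun j =>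
    ((norm_le_pi_norm (b s i) j).trans (norm_le_pi_norm (b s) i)).trans ((hCb s hs).trans
      (le_abs_self Cb))
  refine (le_mul_abs_add_sum_negPart _ _ _ _ i (fun j hji => hb_off s hs i j hji.symm)
    (hh_nonneg s hs i)).trans (mul_le_mul_of_nonneg_right (add_le_add ((hCa s hs i).trans
      (le_abs_self Ca)) ?_) (add_nonneg (abs_nonneg _) (Finset.sum_nonneg fun j _ =>
        negPart_nonneg _)))
  simpa using Finset.sum_le_card_nsmul Finset.univ _ _ fun j _ => hb_le j

theorem linearDrift_integrableOn (hX : ∀ i, ContinuousOn (X · i) (Icc 0 T)) (ha : BddMeasOn T a)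
    (hb : ∀ i j, ContinuousOn (b · i j) (Icc 0 T)) (hh : ∀ i, IntegrableOn (h · i) (Icc 0 T))
    (i : S) : IntegrableOn (linearDrift a b h X · i) (Icc 0 T) :=
  ((ha.integrableOn_mul (hX i).integrableOn_Icc i).sub (ContinuousOn.integrableOn_Icc
    (continuousOn_finsetSum _ fun j _ => (hb i j).mul ((hX j).sub (hX i))))).sub (hh i)

theorem nonneg_of_linearDrift (hX : ∀ i, ContinuousOn (X · i) (Icc 0 T)) (ha : BddMeasOn T a)
    (hb : ∀ i j, ContinuousOn (b · i j) (Icc 0 T))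
    (hb_off : ∀ s ∈ Icc 0 T, ∀ i j, i ≠ j → 0 ≤ b s i j)
    (hh : ∀ i, IntegrableOn (h · i) (Icc 0 T)) (hh_nonneg : ∀ s ∈ Icc 0 T, ∀ i, 0 ≤ h s i)
    (heq : ∀ t ∈ Icc 0 T, ∀ i, X t i = κ i - ∫ s in t..T, linearDrift a b h X s i)
    (hκ : ∀ i, 0 ≤ κ i) :
    ∀ t ∈ Icc 0 T, ∀ i, 0 ≤ X t i := by
  obtain ⟨C, hC, h_le⟩ := exists_linearDrift_le (X := X) ha hb hb_off hh_nonneg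
  exact nonneg_of_integral_eq_of_le hX (linearDrift_integrableOn hX ha hb hh) heq hκ hC h_le

theorem pos_of_linearDrift (hX : ∀ i, ContinuousOn (X · i) (Icc 0 T)) (ha : BddMeasOn T a)
    (hb : ∀ i j, ContinuousOn (b · i j) (Icc 0 T))
    (hb_off : ∀ s ∈ Icc 0 T, ∀ i j, i ≠ j → 0 ≤ b s i j)
    (hh : ∀ i, IntegrableOn (h · i) (Icc 0 T)) (hh_nonneg : ∀ s ∈ Icc 0 T, ∀ i, 0 ≤ h s i)
    (heq : ∀ t ∈ Icc 0 T, ∀ i, X t i = κ i - ∫ s in t..T, linearDrift a b h X s i)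
    (hκ : ∀ i, 0 < κ i) :
    ∀ t ∈ Icc 0 T, ∀ i, 0 < X t i := by
  obtain ⟨C, hC, h_le⟩ := exists_linearDrift_le (X := X) ha hb hb_off hh_nonneg
  exact pos_of_integral_eq_of_le hX (linearDrift_integrableOn hX ha hb hh) heq hκ hC h_le

end LinearSystem

-- Doob's `P`-transform of `Q`: with these rates the H-system becomes a linear system.
noncomputable def doobTransform {S : Type*} (Q : Matrix S S ℝ) (P : ℝ → S → ℝ) (s : ℝ) (i j : S) :
    ℝ :=
  Q i j * P s j / P s i

theorem continuousOn_doobTransform {S : Type*} {T : ℝ} {Q : Matrix S S ℝ}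
    {P : ℝ → S → ℝ} (hP : ∀ i, ContinuousOn (P · i) (Icc 0 T))
    (hP_pos : ∀ s ∈ Icc 0 T, ∀ i, 0 < P s i) (i j : S) :
    ContinuousOn (doobTransform Q P · i j) (Icc 0 T) :=
  (continuousOn_const.mul (hP j)).div (hP i) fun s hs => (hP_pos s hs i).ne'

section Systems

variable {S : Type*} [Fintype S] {T : ℝ} {Q : Matrix S S ℝ} {ρ r P H : ℝ → S → ℝ}

theorem IsGenerator.sum_mul_sub (hQ : IsGenerator Q) (x : S → ℝ) (i : S) :
    ∑ j, Q i j * (x j - x i) = ∑ j, Q i j * x j := by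
  simp only [mul_sub, Finset.sum_sub_distrib, ← Finset.sum_mul, hQ.2 i, zero_mul, sub_zero]

theorem IsPSol.eq_linearDrift (hQ : IsGenerator Q) (hP : IsPSol T Q ρ r P) :
    ∀ t ∈ Icc 0 T, ∀ i,
      P t i = 1 - ∫ s in t..T, linearDrift (fun s i => ρ s i - 2 * r s i) (fun _ => Q) 0 P s i :=
  fun t ht i => by
    simp only [hP.2 t ht i, linearDrift, hQ.sum_mul_sub, mul_comm, Pi.zero_apply, sub_zero]

theorem sum_mul_div_mul_sub (q p x : S → ℝ) (i : S) :
    ∑ j, q j * p j / p i * (x j - x i) =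
      1 / p i * ∑ j, q j * p j * x j - x i / p i * ∑ j, q j * p j := by
  rw [Finset.mul_sum, Finset.mul_sum, ← Finset.sum_sub_distrib]
  exact Finset.sum_congr rfl fun j _ => by ring

theorem IsHSol.eq_linearDrift (hH : IsHSol T Q r P H) :
    ∀ t ∈ Icc 0 T, ∀ i, H t i = 1 - ∫ s in t..T, linearDrift r (doobTransform Q P) 0 H s i :=
  fun t ht i => by
    simp only [hH.2 t ht i, linearDrift, doobTransform, sum_mul_div_mul_sub (Q i),
      Pi.zero_apply]
    congr 2
    ext s
    ring

theorem IsGenerator.doobTransform_nonneg (hQ : IsGenerator Q) {s : ℝ} (hP_pos : ∀ k, 0 < P s k)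
    {i j : S} (hij : i ≠ j) : 0 ≤ doobTransform Q P s i j :=
  div_nonneg (mul_nonneg (hQ.1 i j hij) (hP_pos j).le) (hP_pos i).le

end Systems

theorem linearDrift_one_sub {S : Type*} [Fintype S] (a X : ℝ → S → ℝ) (b : ℝ → S → S → ℝ)
    (s : ℝ) (i : S) :
    linearDrift a b a (fun t k => 1 - X t k) s i = -linearDrift a b 0 X s i := by
  have h_term : ∀ j, b s i j * (1 - X s j - (1 - X s i)) = -(b s i j * (X s j - X s i)) :=
    fun j => by ring
  simp only [linearDrift, Pi.zero_apply, h_term, Finset.sum_neg_distrib]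
  ring

theorem h_system_bounds_general (m : ℕ) (T : ℝ)
    (Q : Matrix (Fin m) (Fin m) ℝ) (hQ : IsGenerator Q)
    (ρ r : ℝ → Fin m → ℝ) (hρ : BddMeasOn T ρ) (hr : BddMeasOn T r)
    (hrpos : ∀ t ∈ Set.Icc (0:ℝ) T, ∀ i, 0 ≤ r t i)
    (P : ℝ → Fin m → ℝ) (hP : IsPSol T Q ρ r P)
    (H : ℝ → Fin m → ℝ) (hH : IsHSol T Q r P H) :
    ∀ t ∈ Set.Icc (0:ℝ) T, ∀ i, 0 < H t i ∧ H t i ≤ 1 := by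
  have hP_pos : ∀ t ∈ Icc 0 T, ∀ i, 0 < P t i :=
    pos_of_linearDrift (b := fun _ => Q) (h := 0) (κ := 1) hP.1 (hρ.sub (hr.const_mul 2))
      (fun _ _ => continuousOn_const) (fun _ _ => hQ.1) (fun _ => integrableOn_zero)
      (fun _ _ _ => le_rfl) (hP.eq_linearDrift hQ) (fun _ => one_pos)
  have hB := continuousOn_doobTransform (Q := Q) hP.1 hP_pos
  have hB_off : ∀ s ∈ Icc 0 T, ∀ i j, i ≠ j → 0 ≤ doobTransform Q P s i j :=
    fun s hs _ _ hij => hQ.doobTransform_nonneg (hP_pos s hs) hij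
  have hH_pos := pos_of_linearDrift hH.1 hr hB hB_off (fun _ => integrableOn_zero)
    (fun _ _ _ => le_rfl) hH.eq_linearDrift (fun _ => one_pos)
  have hH_le := nonneg_of_linearDrift (X := fun t i => 1 - H t i) (κ := 0)
    (fun i => continuousOn_const.sub (hH.1 i)) hr hB hB_off hr.integrableOn hrpos
    (fun t ht i => by
      simp only [linearDrift_one_sub, intervalIntegral.integral_neg, hH.eq_linearDrift t ht i,
        Pi.zero_apply, zero_sub, neg_neg, sub_sub_cancel])
    (fun _ => le_rfl)
  exact fun t ht i => ⟨hH_pos t ht i, sub_nonneg.1 (hH_le t ht i)⟩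

/-- if `r ≥ 0`, `P` solves the P-system associated with `(ρ, r, Q)`
and `H` solves the H-system associated with `(r, Q, P)`, then `0 < H(t,i) ≤ 1`. -/
theorem h_system_bounds (m : ℕ) (hm : 1 ≤ m) (T : ℝ) (hT : 0 < T)
    (Q : Matrix (Fin m) (Fin m) ℝ) (hQ : IsGenerator Q)
    (ρ r : ℝ → Fin m → ℝ) (hρ : BddMeasOn T ρ) (hr : BddMeasOn T r)
    (hrpos : ∀ t ∈ Set.Icc (0:ℝ) T, ∀ i, 0 ≤ r t i)
    (P : ℝ → Fin m → ℝ) (hP : IsPSol T Q ρ r P)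
    (H : ℝ → Fin m → ℝ) (hH : IsHSol T Q r P H) :
    ∀ t ∈ Set.Icc (0:ℝ) T, ∀ i, 0 < H t i ∧ H t i ≤ 1 :=
  h_system_bounds_general m T Q hQ ρ r hρ hr hrpos P hP H hH
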